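/- arXiv:2309.05237 — 3 statements merged into one kernel-verified Lean document; each statement's English description precedes it below -/
import Mathlib

section
/- Let A be a PC(η)-axial algebra and let a and b be primitive axes of A. Then φ_a(b) = φ_b(a), i.e. the coefficient of a in the A_1(a)-component of b equals the coefficient of b in the A_1(b)-component of a. -/
open Submodule

variable {F : Type*} [Field F] {A : Type*} [NonUnitalNonAssocCommRing A]
  [Module F A] [SMulCommClass F A A] [IsScalarTower F A A]

variable (F) in
/-- The `lam`-eigenspace of the adjoint map of `a`. -/
def PCeig (a : A) (lam : F) : Submodule F A where
  carrier := {x : A | a * x = lam • x}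
  add_mem' := by
    intro x y hx hy
    simp only [Set.mem_setOf_eq] at hx hy ⊢
    rw [mul_add, hx, hy, smul_add]
  zero_mem' := by simp
  smul_mem' := by
    intro c x hx
    simp only [Set.mem_setOf_eq] at hx ⊢
    rw [mul_smul_comm, hx, smul_smul, smul_smul, mul_comm]

variable (F) in
/-- The fusion law `PC(η)` for an idempotent (axis) `a`. -/
structure IsPCAxis (η : F) (a : A) : Prop where
  idem : a * a = a
  decomp : PCeig F a 1 ⊔ PCeig F a η ⊔ PCeig F a (1/2 : F) = ⊤
  fus11 : ∀ x ∈ PCeig F a 1, ∀ y ∈ PCeig F a 1, x * y ∈ PCeig F a 1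
  fus1e : ∀ x ∈ PCeig F a 1, ∀ y ∈ PCeig F a η, x * y ∈ PCeig F a η
  fus1h : ∀ x ∈ PCeig F a 1, ∀ y ∈ PCeig F a (1/2 : F), x * y ∈ PCeig F a (1/2 : F)
  fusee : ∀ x ∈ PCeig F a η, ∀ y ∈ PCeig F a η, x * y ∈ PCeig F a 1
  fuseh : ∀ x ∈ PCeig F a η, ∀ y ∈ PCeig F a (1/2 : F), x * y ∈ PCeig F a (1/2 : F)
  fushh : ∀ x ∈ PCeig F a (1/2 : F), ∀ y ∈ PCeig F a (1/2 : F),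
    x * y ∈ PCeig F a 1 ⊔ PCeig F a η

variable (F) in
/-- A primitive axis: an axis with `A_1(a) = F·a` (one-dimensional). -/
def IsPrimPCAxis (η : F) (a : A) : Prop :=
  IsPCAxis F η a ∧ a ≠ 0 ∧ PCeig F a 1 = Submodule.span F {a}

variable (F A) in
/-- A `PC(η)`-axial algebra: generated, as a non-unital algebra, by a (nonempty) set of axes. -/
def IsPCAxialAlgebra (η : F) : Prop :=
  ∃ X : Set A, X.Nonempty ∧ (∀ a ∈ X, IsPCAxis F η a) ∧
    NonUnitalAlgebra.adjoin F X = ⊤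

variable (F A) in
/-- A primitive `PC(η)`-axial algebra: generated by a (nonempty) set of primitive axes. -/
def IsPrimPCAxialAlgebra (η : F) : Prop :=
  ∃ X : Set A, X.Nonempty ∧ (∀ a ∈ X, IsPrimPCAxis F η a) ∧
    NonUnitalAlgebra.adjoin F X = ⊤

/-!
Write `b = α a + u + v` and `a = β b + u' + v'`. As `b` is idempotent, `(L_b - η)(L_b - 1/2)`
sends `a` to `β (1 - η)/2 · b`, whose `1/2`-component with respect to `a` is `β (1 - η)/2 · v`.
Expanding the same element in the eigenspaces of `a` with the fusion law, and using
`2uv = (1 - α) v` from `b² = b`, this component is `α (1 - η)/2 · v`. So `α = β` unless `v = 0`,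
and symmetrically unless `v' = 0`. If `v = v' = 0`, the `η`-part of `b² = b` gives `2αη = 1`
when `u ≠ 0`, likewise `2βη = 1` when `u' ≠ 0`; and `u = 0` means `b = α a`, which forces
`α = 1`, `b = a` and `β = 1`.
-/

lemma one_ne_half {K : Type*} [Field K] (h2 : (2 : K) ≠ 0) : (1 : K) ≠ 1 / 2 := by
  rw [ne_eq, eq_div_iff h2]
  exact fun h ↦ one_ne_zero (by linear_combination h)

section Eigenspaces

variable {K M : Type*} [Field K] [NonUnitalNonAssocCommRing M] [Module K M] [SMulCommClass K M M]
  {a x y z x' y' z' : M} {l m n : K}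

lemma mem_PCeig : x ∈ PCeig K a l ↔ a * x = l • x := Iff.rfl

variable (K) in
lemma mem_PCeig_one_of_mul_self (ha : a * a = a) : a ∈ PCeig K a 1 := by
  rw [mem_PCeig, ha, one_smul]

lemma mul_mul_sub_add_smul_of_mem_PCeig (hx : x ∈ PCeig K a l) (hy : y ∈ PCeig K a m)
    (hz : z ∈ PCeig K a n) :
    a * (a * (x + y + z)) - (m + n) • (a * (x + y + z)) + (m * n) • (x + y + z)
      = ((l - m) * (l - n)) • x := by
  rw [mem_PCeig] at hx hy hz
  simp only [mul_add, mul_smul_comm, hx, hy, hz]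
  module

lemma eq_zero_of_add_add_eq_zero_of_mem_PCeig (hlm : l ≠ m) (hln : l ≠ n)
    (hx : x ∈ PCeig K a l) (hy : y ∈ PCeig K a m) (hz : z ∈ PCeig K a n)
    (h : x + y + z = 0) : x = 0 := by
  have key := mul_mul_sub_add_smul_of_mem_PCeig hx hy hz
  rw [h, mul_zero, mul_zero, smul_zero, smul_zero, sub_zero, add_zero] at key
  exact (smul_eq_zero.mp key.symm).resolve_left
    (mul_ne_zero (sub_ne_zero.2 hlm) (sub_ne_zero.2 hln))

lemma eq_of_add_add_eq_of_mem_PCeig (hlm : l ≠ m) (hln : l ≠ n) (hmn : m ≠ n)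
    (hx : x ∈ PCeig K a l) (hy : y ∈ PCeig K a m) (hz : z ∈ PCeig K a n)
    (hx' : x' ∈ PCeig K a l) (hy' : y' ∈ PCeig K a m) (hz' : z' ∈ PCeig K a n)
    (h : x + y + z = x' + y' + z') : x = x' ∧ y = y' ∧ z = z' := by
  have hx'' := sub_mem hx hx'
  have hy'' := sub_mem hy hy'
  have hz'' := sub_mem hz hz'
  have h0 : (x - x') + (y - y') + (z - z') = 0 := by rw [← sub_eq_zero] at h; rw [← h]; abel
  refine ⟨sub_eq_zero.mp ?_, sub_eq_zero.mp ?_, sub_eq_zero.mp ?_⟩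
  · exact eq_zero_of_add_add_eq_zero_of_mem_PCeig hlm hln hx'' hy'' hz'' h0
  · exact eq_zero_of_add_add_eq_zero_of_mem_PCeig hlm.symm hmn hy'' hx'' hz''
      (by rw [← h0]; abel)
  · exact eq_zero_of_add_add_eq_zero_of_mem_PCeig hln.symm hmn.symm hz'' hx'' hy''
      (by rw [← h0]; abel)

lemma PCeig.eq_of_add_add_eq {η : K} (h2 : (2 : K) ≠ 0) (hη1 : η ≠ 1) (hηh : η ≠ 1 / 2)
    (hx : x ∈ PCeig K a 1) (hy : y ∈ PCeig K a η) (hz : z ∈ PCeig K a (1 / 2 : K))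
    (hx' : x' ∈ PCeig K a 1) (hy' : y' ∈ PCeig K a η) (hz' : z' ∈ PCeig K a (1 / 2 : K))
    (h : x + y + z = x' + y' + z') : x = x' ∧ y = y' ∧ z = z' :=
  eq_of_add_add_eq_of_mem_PCeig hη1.symm (one_ne_half h2) hηh hx hy hz hx' hy' hz' h

end Eigenspaces

section Idempotents

variable {η α β : F} {a b u v u' v' : A}

lemma mul_self_smul_add_add_eq (ha : a * a = a) (h2 : (2 : F) ≠ 0) (hu : u ∈ PCeig F a η)
    (hv : v ∈ PCeig F a (1 / 2 : F)) :
    (α • a + u + v) * (α • a + u + v)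
      = (α * α) • a + u * u + (2 * α * η) • u + (α • v + (2 : F) • (u * v)) + v * v := by
  rw [mem_PCeig] at hu hv
  simp only [add_mul, mul_add, smul_mul_assoc, mul_smul_comm, ha, hu, hv, mul_comm u a,
    mul_comm v a, mul_comm v u]
  match_scalars <;> field_simp <;> ring

lemma eq_one_of_mul_self_of_eq_smul (ha : a * a = a) (hb : b * b = b) (hb0 : b ≠ 0)
    (hbd : b = α • a) : α = 1 := by
  have ha0 : a ≠ 0 := by rintro rfl; exact hb0 (by rw [hbd, smul_zero])
  have hα0 : α ≠ 0 := by rintro rfl; exact hb0 (by rw [hbd, zero_smul])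
  have hαα : α * α = α := by
    apply smul_left_injective F ha0
    rwa [hbd, smul_mul_smul_comm, ha] at hb
  exact mul_left_cancel₀ hα0 (hαα.trans (mul_one α).symm)

lemma coeff_eq_of_eq_smul (ha : a * a = a) (hb : b * b = b) (h2 : (2 : F) ≠ 0) (hη1 : η ≠ 1)
    (hηh : η ≠ 1 / 2) (hb0 : b ≠ 0) (hu' : u' ∈ PCeig F b η)
    (hv' : v' ∈ PCeig F b (1 / 2 : F))
    (hbd : b = α • a) (had : a = β • b + u' + v') : α = β := by
  obtain rfl := eq_one_of_mul_self_of_eq_smul ha hb hb0 hbd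
  rw [one_smul] at hbd
  subst hbd
  have hb1 := mem_PCeig_one_of_mul_self F hb
  obtain ⟨h, -, -⟩ := PCeig.eq_of_add_add_eq h2 hη1 hηh (smul_mem _ β hb1) hu' hv' hb1
    (zero_mem _) (zero_mem _) (by rw [← had, add_zero, add_zero])
  exact (smul_left_injective F hb0 (h.trans (one_smul F b).symm)).symm

end Idempotents

namespace IsPCAxis

variable {η α : F} {a b u v : A}

lemma two_smul_mul_eq (ha : IsPCAxis F η a) (h2 : (2 : F) ≠ 0) (hη1 : η ≠ 1)
    (hηh : η ≠ 1 / 2) (hu : u ∈ PCeig F a η) (hv : v ∈ PCeig F a (1 / 2 : F)) (hb : b * b = b)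
    (hbd : b = α • a + u + v) : (2 : F) • (u * v) = (1 - α) • v := by
  have ha1 := mem_PCeig_one_of_mul_self F ha.idem
  obtain ⟨w, hw, w', hw', hvv⟩ := mem_sup.mp (ha.fushh v hv v hv)
  rw [hbd, mul_self_smul_add_add_eq ha.idem h2 hu hv, ← hvv] at hb
  have h1 : ((α * α) • a + u * u + w) + ((2 * α * η) • u + w')
      + (α • v + (2 : F) • (u * v)) = α • a + u + v := by
    rw [← hb]; abel
  obtain ⟨-, -, h⟩ := PCeig.eq_of_add_add_eq h2 hη1 hηh
    (add_mem (add_mem (smul_mem _ _ ha1) (ha.fusee u hu u hu)) hw)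
    (add_mem (smul_mem _ _ hu) hw') (add_mem (smul_mem _ _ hv) (smul_mem _ _ (ha.fuseh u hu v hv)))
    (smul_mem _ _ ha1) hu hv h1
  linear_combination (norm := module) h

lemma exists_mul_mul_sub_add_smul_eq (ha : IsPCAxis F η a) (h2 : (2 : F) ≠ 0) (hη1 : η ≠ 1)
    (hηh : η ≠ 1 / 2) (hu : u ∈ PCeig F a η) (hv : v ∈ PCeig F a (1 / 2 : F))
    (hb : b * b = b) (hbd : b = α • a + u + v) :
    ∃ x ∈ PCeig F a 1, ∃ y ∈ PCeig F a η,
      b * (b * a) - (η + 1 / 2) • (b * a) + (η * (1 / 2)) • a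
        = x + y + (α * ((1 - η) * (1 - 1 / 2))) • v := by
  have huv := ha.two_smul_mul_eq h2 hη1 hηh hu hv hb hbd
  have ha1 := mem_PCeig_one_of_mul_self F ha.idem
  obtain ⟨w, hw, w', hw', hvv⟩ := mem_sup.mp (ha.fushh v hv v hv)
  refine ⟨(α * α - (η + 1 / 2) * α + η * (1 / 2)) • a + η • (u * u) + (1 / 2 : F) • w,
    add_mem (add_mem (smul_mem _ _ ha1) (smul_mem _ _ (ha.fusee u hu u hu)))
      (smul_mem _ _ hw),
    (α * η * η + α * η - (η + 1 / 2) * η) • u + (1 / 2 : F) • w',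
    add_mem (smul_mem _ _ hu) (smul_mem _ _ hw'), ?_⟩
  rw [mem_PCeig] at hu hv
  subst hbd
  simp only [add_mul, mul_add, smul_mul_assoc, mul_smul_comm, ha.idem, hu, hv, mul_comm u a,
    mul_comm v a, mul_comm v u, ← hvv]
  linear_combination (norm := (match_scalars <;> field_simp <;> ring)) ((1 / 2 + η) / 2) • huv

lemma coeff_eq_or_eq_zero (ha : IsPCAxis F η a) (hb : b * b = b) (h2 : (2 : F) ≠ 0)
    (hη1 : η ≠ 1) (hηh : η ≠ 1 / 2) {β : F} {u' v' : A}
    (hu : u ∈ PCeig F a η) (hv : v ∈ PCeig F a (1 / 2 : F))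
    (hu' : u' ∈ PCeig F b η) (hv' : v' ∈ PCeig F b (1 / 2 : F))
    (hbd : b = α • a + u + v) (had : a = β • b + u' + v') : α = β ∨ v = 0 := by
  have ha1 := mem_PCeig_one_of_mul_self F ha.idem
  obtain ⟨x, hx, y, hy, hα⟩ := ha.exists_mul_mul_sub_add_smul_eq h2 hη1 hηh hu hv hb hbd
  have hβ := mul_mul_sub_add_smul_of_mem_PCeig (smul_mem _ β (mem_PCeig_one_of_mul_self F hb))
    hu' hv'
  rw [← had] at hβ
  set c := (1 - η) * (1 - 1 / 2 : F)
  obtain ⟨-, -, h⟩ := PCeig.eq_of_add_add_eq h2 hη1 hηh hx hy (smul_mem _ _ hv)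
    (smul_mem _ (c * β * α) ha1) (smul_mem _ (c * β) hu)
    (smul_mem _ (c * β) hv) (by rw [← hα, hβ, hbd]; module)
  have hc : c ≠ 0 := mul_ne_zero (sub_ne_zero.2 hη1.symm) (sub_ne_zero.2 (one_ne_half h2))
  refine or_iff_not_imp_right.2 fun hv0 ↦ mul_right_cancel₀ hc ?_
  rw [smul_left_injective F hv0 h, mul_comm]

lemma two_mul_mul_eq_one (ha : IsPCAxis F η a) (h2 : (2 : F) ≠ 0) (hη1 : η ≠ 1)
    (hηh : η ≠ 1 / 2) (hu : u ∈ PCeig F a η) (hu0 : u ≠ 0) (hb : b * b = b)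
    (hbd : b = α • a + u) : 2 * α * η = 1 := by
  have ha1 := mem_PCeig_one_of_mul_self F ha.idem
  have hsq := mul_self_smul_add_add_eq (α := α) ha.idem h2 hu (zero_mem _)
  rw [add_zero, ← hbd, hb, hbd] at hsq
  obtain ⟨-, h, -⟩ := PCeig.eq_of_add_add_eq h2 hη1 hηh
    (add_mem (smul_mem _ (α * α) ha1) (ha.fusee u hu u hu))
    (smul_mem _ (2 * α * η) hu)
    (zero_mem _) (smul_mem _ _ ha1) hu (zero_mem _)
    (by rw [hsq]; simp)
  exact smul_left_injective F hu0 (h.trans (one_smul F u).symm)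

end IsPCAxis

theorem stmt2_general (η : F) (h2 : (2 : F) ≠ 0) (hη1 : η ≠ 1) (hηh : η ≠ 1 / 2)
    (a b : A) (ha : IsPrimPCAxis F η a) (hb : IsPrimPCAxis F η b)
    (α β : F) (u v u' v' : A)
    (hu : u ∈ PCeig F a η) (hv : v ∈ PCeig F a (1 / 2 : F))
    (hu' : u' ∈ PCeig F b η) (hv' : v' ∈ PCeig F b (1 / 2 : F))
    (hbd : b = α • a + u + v) (had : a = β • b + u' + v') :
    α = β := by
  obtain ⟨ha, ha0, -⟩ := ha
  obtain ⟨hb, hb0, -⟩ := hb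
  obtain h | rfl := ha.coeff_eq_or_eq_zero hb.idem h2 hη1 hηh hu hv hu' hv' hbd had
  · exact h
  obtain h | rfl := hb.coeff_eq_or_eq_zero ha.idem h2 hη1 hηh hu' hv' hu hv had hbd
  · exact h.symm
  rw [add_zero] at hbd had
  rcases eq_or_ne u 0 with rfl | hu0
  · exact coeff_eq_of_eq_smul ha.idem hb.idem h2 hη1 hηh hb0 hu' hv' (by rwa [add_zero] at hbd)
      (by rw [had, add_zero])
  rcases eq_or_ne u' 0 with rfl | hu'0
  · exact (coeff_eq_of_eq_smul hb.idem ha.idem h2 hη1 hηh ha0 hu hv (by rwa [add_zero] at had)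
      (by rw [hbd, add_zero])).symm
  have hα := ha.two_mul_mul_eq_one h2 hη1 hηh hu hu0 hb.idem hbd
  have hβ := hb.two_mul_mul_eq_one h2 hη1 hηh hu' hu'0 ha.idem had
  have hη0 : 2 * η ≠ 0 := right_ne_zero_of_mul_eq_one (a := α) (by linear_combination hα)
  exact mul_right_cancel₀ hη0 (by linear_combination hα - hβ)

/-- for primitive axes `a`, `b` of a `PC(η)`-axial algebra, `φ_a(b) = φ_b(a)`. -/
theorem stmt2 (η : F) (h2 : (2 : F) ≠ 0) (hη1 : η ≠ 1) (hηh : η ≠ 1 / 2)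
    (hA : IsPCAxialAlgebra F A η)
    (a b : A) (ha : IsPrimPCAxis F η a) (hb : IsPrimPCAxis F η b)
    (α β : F) (u v u' v' : A)
    (hu : u ∈ PCeig F a η) (hv : v ∈ PCeig F a (1 / 2 : F))
    (hu' : u' ∈ PCeig F b η) (hv' : v' ∈ PCeig F b (1 / 2 : F))
    (hbd : b = α • a + u + v) (had : a = β • b + u' + v') :
    α = β :=
  stmt2_general η h2 hη1 hηh a b ha hb α β u v u' v' hu hv hu' hv' hbd had
end

section
/- Let A be a primitive PC(η)-axial algebra. Then A is equal to the linear span of its set of primitive axes; in particular, A has a spanning set (and, if finite-dimensional, a basis) consisting of primitive axes. -/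
open Submodule

variable {F : Type*} [Field F] {A : Type*} [NonUnitalNonAssocCommRing A]
  [Module F A] [SMulCommClass F A A] [IsScalarTower F A A]

/-! For an axis `a`, the Miyamoto map `τ_a`, which is `1` on `A_1(a) ⊕ A_η(a)` and `-1` on
`A_{1/2}(a)`, is an algebra automorphism because the fusion law `PC(η)` is `ℤ/2`-graded; hence it
permutes the primitive axes. If `a` is primitive and `b = b₁ + b_η + b_{1/2}` is any element, then
`b₁ ∈ F a`, while `b + τ_a b` and `b - τ_a b` recover `b_η` and `b_{1/2}`. So
`a b = b₁ + η b_η + ½ b_{1/2}` is a combination of `a`, `b` and `τ_a b`, and the span of the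
primitive axes is closed under multiplication. It contains a generating set, so it is all of `A`. -/

lemma Submodule.mul_mem_map_of_mul_mem {R B : Type*} [Semiring R] [NonUnitalNonAssocSemiring B]
    [Module R B] (f : B ≃ₗ[R] B) (hf : ∀ x y, f (x * y) = f x * f y) {U V W : Submodule R B}
    (h : ∀ x ∈ U, ∀ y ∈ V, x * y ∈ W) :
    ∀ x ∈ U.map (f : B →ₗ[R] B), ∀ y ∈ V.map (f : B →ₗ[R] B), x * y ∈ W.map (f : B →ₗ[R] B) := by
  rintro - ⟨x, hx, rfl⟩ - ⟨y, hy, rfl⟩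
  exact ⟨x * y, h x hx y hy, hf x y⟩

lemma Submodule.mul_mem_span_of_forall_mul_mem {R B : Type*} [CommSemiring R]
    [NonUnitalNonAssocSemiring B] [Module R B] [SMulCommClass R B B] [IsScalarTower R B B]
    {S : Set B} (hS : ∀ a ∈ S, ∀ b ∈ S, a * b ∈ span R S) {x y : B} (hx : x ∈ span R S)
    (hy : y ∈ span R S) : x * y ∈ span R S := by
  induction hx, hy using span_induction₂ with
  | mem_mem x y hx hy => exact hS x hx y hy
  | zero_left y _ => simp
  | zero_right x _ => simp
  | add_left x y z _ _ _ hxz hyz => simpa [add_mul] using add_mem hxz hyz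
  | add_right x y z _ _ _ hxy hxz => simpa [mul_add] using add_mem hxy hxz
  | smul_left r x y _ _ hxy => simpa [smul_mul_assoc] using smul_mem _ r hxy
  | smul_right r x y _ _ hxy => simpa [mul_smul_comm] using smul_mem _ r hxy

lemma NonUnitalAlgebra.adjoin_le_span {R B : Type*} [CommSemiring R]
    [NonUnitalNonAssocSemiring B] [Module R B] [SMulCommClass R B B] [IsScalarTower R B B]
    {X S : Set B} (hXS : X ⊆ S) (hS : ∀ a ∈ S, ∀ b ∈ S, a * b ∈ span R S) :
    (adjoin R X).toSubmodule ≤ span R S :=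
  adjoin_le (S := (span R S).toNonUnitalSubalgebra
    fun _ _ hx hy ↦ mul_mem_span_of_forall_mul_mem hS hx hy) (hXS.trans subset_span)

section PCAxes

variable {F : Type*} [Field F] {A : Type*} [NonUnitalNonAssocCommRing A] [Module F A]
  [SMulCommClass F A A] {η : F}

section Automorphism

variable (f : A ≃ₗ[F] A)

lemma PCeig_map_eq (hf : ∀ x y, f (x * y) = f x * f y) (b : A) (lam : F) :
    PCeig F (f b) lam = (PCeig F b lam).map (f : A →ₗ[F] A) := by
  ext x
  rw [Submodule.mem_map_equiv]
  change f b * x = lam • x ↔ b * f.symm x = lam • f.symm x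
  rw [← f.symm.injective.eq_iff, map_smul,
    ← f.apply_symm_apply x, ← hf, f.symm_apply_apply, f.symm_apply_apply]

lemma IsPCAxis.map (hf : ∀ x y, f (x * y) = f x * f y) {b : A} (hb : IsPCAxis F η b) :
    IsPCAxis F η (f b) := by
  refine ⟨by rw [← hf, hb.idem], ?_, ?_, ?_, ?_, ?_, ?_, ?_⟩ <;> simp only [PCeig_map_eq f hf]
  · rw [← Submodule.map_sup, ← Submodule.map_sup, hb.decomp, Submodule.map_top,
      LinearEquiv.range]
  · exact mul_mem_map_of_mul_mem f hf hb.fus11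
  · exact mul_mem_map_of_mul_mem f hf hb.fus1e
  · exact mul_mem_map_of_mul_mem f hf hb.fus1h
  · exact mul_mem_map_of_mul_mem f hf hb.fusee
  · exact mul_mem_map_of_mul_mem f hf hb.fuseh
  · rw [← Submodule.map_sup]
    exact mul_mem_map_of_mul_mem f hf hb.fushh

lemma IsPrimPCAxis.map (hf : ∀ x y, f (x * y) = f x * f y) {b : A}
    (hb : IsPrimPCAxis F η b) : IsPrimPCAxis F η (f b) := by
  obtain ⟨hax, hne, hone⟩ := hb
  refine ⟨hax.map f hf, f.map_ne_zero_iff.2 hne, ?_⟩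
  rw [PCeig_map_eq f hf, hone, Submodule.map_span, Set.image_singleton, LinearEquiv.coe_coe]

end Automorphism

section Miyamoto

/-- `id - 2 • P`, where `P = (4 / (2η - 1)) • (L_a - 1)(L_a - η)` is the Lagrange-interpolation
projection onto `A_{1/2}(a)` along `A_1(a) ⊕ A_η(a)`. -/
noncomputable def miyamoto (η : F) (a : A) : A →ₗ[F] A :=
  LinearMap.id - (8 / (2 * η - 1)) •
    ((LinearMap.mulLeft F a - LinearMap.id) ∘ₗ (LinearMap.mulLeft F a - η • LinearMap.id))

variable {a x y : A}

lemma miyamoto_apply_of_mem {lam : F} (hx : x ∈ PCeig F a lam) :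
    miyamoto η a x = (1 - 8 / (2 * η - 1) * ((lam - 1) * (lam - η))) • x := by
  have hx : a * x = lam • x := hx
  simp only [miyamoto, LinearMap.sub_apply, LinearMap.smul_apply, LinearMap.comp_apply,
    LinearMap.mulLeft_apply, LinearMap.id_apply, hx, mul_sub, mul_smul_comm]
  module

lemma miyamoto_apply_of_mem_one (hx : x ∈ PCeig F a 1) : miyamoto η a x = x := by
  simp [miyamoto_apply_of_mem hx]

lemma miyamoto_apply_of_mem_eta (hx : x ∈ PCeig F a η) : miyamoto η a x = x := by
  simp [miyamoto_apply_of_mem hx]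

lemma miyamoto_apply_of_mem_sup (hx : x ∈ PCeig F a 1 ⊔ PCeig F a η) : miyamoto η a x = x := by
  obtain ⟨x₁, hx₁, xη, hxη, rfl⟩ := Submodule.mem_sup.1 hx
  rw [map_add, miyamoto_apply_of_mem_one hx₁, miyamoto_apply_of_mem_eta hxη]

lemma miyamoto_apply_of_mem_half (h2 : (2 : F) ≠ 0) (hηh : η ≠ 1 / 2)
    (hx : x ∈ PCeig F a (1 / 2)) : miyamoto η a x = -x := by
  have hη : 2 * η - 1 ≠ 0 := fun h ↦ hηh (by field_simp; linear_combination h)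
  have hcoeff : 1 - 8 / (2 * η - 1) * ((1 / 2 - 1) * (1 / 2 - η)) = (-1 : F) := by
    field_simp
    ring
  rw [miyamoto_apply_of_mem hx, hcoeff, neg_one_smul]

lemma miyamoto_apply_add (h2 : (2 : F) ≠ 0) (hηh : η ≠ 1 / 2)
    (hx : x ∈ PCeig F a 1 ⊔ PCeig F a η) (hy : y ∈ PCeig F a (1 / 2)) :
    miyamoto η a (x + y) = x - y := by
  rw [map_add, miyamoto_apply_of_mem_sup hx, miyamoto_apply_of_mem_half h2 hηh hy, sub_eq_add_neg]

lemma IsPCAxis.exists_eq_add (ha : IsPCAxis F η a) (x : A) :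
    ∃ e ∈ PCeig F a 1 ⊔ PCeig F a η, ∃ o ∈ PCeig F a (1 / 2), x = e + o := by
  obtain ⟨e, he, o, ho, hx⟩ := Submodule.mem_sup.1 (ha.decomp ▸ Submodule.mem_top : x ∈ _)
  exact ⟨e, he, o, ho, hx.symm⟩

lemma IsPCAxis.mul_mem_sup (ha : IsPCAxis F η a) (hx : x ∈ PCeig F a 1 ⊔ PCeig F a η)
    (hy : y ∈ PCeig F a 1 ⊔ PCeig F a η) : x * y ∈ PCeig F a 1 ⊔ PCeig F a η := by
  obtain ⟨x₁, hx₁, xη, hxη, rfl⟩ := Submodule.mem_sup.1 hx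
  obtain ⟨y₁, hy₁, yη, hyη, rfl⟩ := Submodule.mem_sup.1 hy
  rw [add_mul, mul_add, mul_add, mul_comm xη y₁]
  exact add_mem (add_mem (Submodule.mem_sup_left (ha.fus11 _ hx₁ _ hy₁))
      (Submodule.mem_sup_right (ha.fus1e _ hx₁ _ hyη)))
    (add_mem (Submodule.mem_sup_right (ha.fus1e _ hy₁ _ hxη))
      (Submodule.mem_sup_left (ha.fusee _ hxη _ hyη)))

lemma IsPCAxis.mul_mem_half (ha : IsPCAxis F η a) (hx : x ∈ PCeig F a 1 ⊔ PCeig F a η)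
    (hy : y ∈ PCeig F a (1 / 2)) : x * y ∈ PCeig F a (1 / 2) := by
  obtain ⟨x₁, hx₁, xη, hxη, rfl⟩ := Submodule.mem_sup.1 hx
  rw [add_mul]
  exact add_mem (ha.fus1h _ hx₁ _ hy) (ha.fuseh _ hxη _ hy)

lemma IsPCAxis.miyamoto_mul (ha : IsPCAxis F η a) (h2 : (2 : F) ≠ 0) (hηh : η ≠ 1 / 2)
    (x y : A) : miyamoto η a (x * y) = miyamoto η a x * miyamoto η a y := by
  obtain ⟨e, he, o, ho, rfl⟩ := ha.exists_eq_add x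
  obtain ⟨e', he', o', ho', rfl⟩ := ha.exists_eq_add y
  have hexpand : (e + o) * (e' + o') = (e * e' + o * o') + (e * o' + e' * o) := by
    rw [add_mul, mul_add, mul_add, mul_comm o e']
    abel
  rw [hexpand, miyamoto_apply_add h2 hηh (add_mem (ha.mul_mem_sup he he') (ha.fushh _ ho _ ho'))
      (add_mem (ha.mul_mem_half he ho') (ha.mul_mem_half he' ho)),
    miyamoto_apply_add h2 hηh he ho, miyamoto_apply_add h2 hηh he' ho', sub_mul, mul_sub, mul_sub,
    mul_comm o e']
  abel

lemma IsPCAxis.miyamoto_involutive (ha : IsPCAxis F η a) (h2 : (2 : F) ≠ 0) (hηh : η ≠ 1 / 2) :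
    Function.Involutive (miyamoto η a) := by
  intro x
  obtain ⟨e, he, o, ho, rfl⟩ := ha.exists_eq_add x
  rw [miyamoto_apply_add h2 hηh he ho, sub_eq_add_neg,
    miyamoto_apply_add h2 hηh he (neg_mem ho), sub_neg_eq_add]

lemma IsPCAxis.isPrimPCAxis_miyamoto (ha : IsPCAxis F η a) (h2 : (2 : F) ≠ 0)
    (hηh : η ≠ 1 / 2) {b : A} (hb : IsPrimPCAxis F η b) : IsPrimPCAxis F η (miyamoto η a b) :=
  hb.map (.ofInvolutive _ (ha.miyamoto_involutive h2 hηh)) (ha.miyamoto_mul h2 hηh)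

lemma IsPrimPCAxis.mul_mem_span (ha : IsPrimPCAxis F η a) (h2 : (2 : F) ≠ 0) (hηh : η ≠ 1 / 2)
    (b : A) : a * b ∈ Submodule.span F {a, b, miyamoto η a b} := by
  obtain ⟨hax, -, hone⟩ := ha
  obtain ⟨e, he, o, ho, rfl⟩ := hax.exists_eq_add b
  obtain ⟨b₁, hb₁, bη, hbη, rfl⟩ := Submodule.mem_sup.1 he
  obtain ⟨c, rfl⟩ := Submodule.mem_span_singleton.1 (hone ▸ hb₁)
  have hτ := miyamoto_apply_add h2 hηh he ho
  have hab : a * (c • a + bη + o) = (c • a + η • bη) + (1 / 2 : F) • o := by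
    rw [mul_add, mul_add, hb₁, hbη, ho, one_smul]
  have hcomb : a * (c • a + bη + o) = (c - c * η) • a + (1 / 2 * (η + 1 / 2)) • (c • a + bη + o)
      + (1 / 2 * (η - 1 / 2)) • miyamoto η a (c • a + bη + o) := by
    rw [hab, hτ]
    match_scalars <;> field_simp <;> ring
  rw [hcomb]
  refine add_mem (add_mem ?_ ?_) ?_ <;> refine Submodule.smul_mem _ _ (Submodule.subset_span ?_)
    <;> simp

end Miyamoto

end PCAxes

theorem stmt6_general (η : F) (h2 : (2 : F) ≠ 0) (hηh : η ≠ 1 / 2)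
    (hA : IsPrimPCAxialAlgebra F A η) :
    Submodule.span F {a : A | IsPrimPCAxis F η a} = ⊤ := by
  obtain ⟨X, -, hX, hXtop⟩ := hA
  set S := {a : A | IsPrimPCAxis F η a}
  have hS : ∀ a ∈ S, ∀ b ∈ S, a * b ∈ span F S := fun a ha b hb ↦
    span_mono (Set.insert_subset ha <| Set.insert_subset hb <|
      Set.singleton_subset_iff.2 (ha.1.isPrimPCAxis_miyamoto h2 hηh hb)) (ha.mul_mem_span h2 hηh b)
  rw [eq_top_iff, ← NonUnitalAlgebra.top_toSubmodule, ← hXtop]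
  exact NonUnitalAlgebra.adjoin_le_span hX hS

/-- a primitive `PC(η)`-axial algebra is the linear span of its primitive axes. -/
theorem stmt6 (η : F) (h2 : (2 : F) ≠ 0) (hη1 : η ≠ 1) (hηh : η ≠ 1 / 2)
    (hA : IsPrimPCAxialAlgebra F A η) :
    Submodule.span F {a : A | IsPrimPCAxis F η a} = ⊤ :=
  stmt6_general η h2 hηh hA
end

section
/- Let A be a PC(η)-axial algebra and let a, b be primitive axes with α = φ_a(b). Let τ_a : A → A be the Miyamoto involution of a. Then b^{τ_a} = (1/(1-2η))·(4α(1-η)·a + (1+2η)·b - 4·ab) and (ab)^{τ_a} = (1/(1-2η))·(2α(1-η)·a + 2η·b - (1+2η)·ab). In particular, on the subalgebra generated by a and b, with respect to the spanning set a, b, ab, the maps τ_a and τ_b act by the matrices (1/(1-2η))·[[1-2η, 0, 0], [4α(1-η), 1+2η, -4], [2α(1-η), 2η, -1-2η]] and (1/(1-2η))·[[1+2η, 4α(1-η), -4], [0, 1-2η, 0], [2η, 2α(1-η), -1-2η]] respectively (vectors acted on the right row-wise). -/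
open Submodule

variable {F : Type*} [Field F] {A : Type*} [NonUnitalNonAssocCommRing A]
  [Module F A] [SMulCommClass F A A] [IsScalarTower F A A]

section Aux
lemma mem_PCeig' {a x : A} {lam : F} (h : x ∈ PCeig F a lam) : a * x = lam • x := h

lemma eig_pair (a : A) {l1 l2 : F} (h12 : l1 ≠ l2) {x1 x2 : A}
    (h1 : a * x1 = l1 • x1) (h2 : a * x2 = l2 • x2) (hsum : x1 + x2 = 0) :
    x1 = 0 ∧ x2 = 0 := by
  have e1 : l1 • x1 + l2 • x2 = 0 := by
    have h := congrArg (a * ·) hsum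
    simpa [mul_add, h1, h2] using h
  have e2 : (l1 - l2) • x1 = 0 := by
    linear_combination (norm := module) e1 - l2 • hsum
  have hx1 : x1 = 0 := by
    rcases smul_eq_zero.mp e2 with h | h
    · exact ((sub_ne_zero.mpr h12) h).elim
    · exact h
  refine ⟨hx1, ?_⟩
  rw [hx1, zero_add] at hsum; exact hsum

lemma eig_tri (a : A) {l1 l2 l3 : F} (h12 : l1 ≠ l2) (h13 : l1 ≠ l3) (h23 : l2 ≠ l3)
    {x1 x2 x3 : A} (h1 : a * x1 = l1 • x1) (h2 : a * x2 = l2 • x2) (h3 : a * x3 = l3 • x3)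
    (hsum : x1 + x2 + x3 = 0) : x1 = 0 ∧ x2 = 0 ∧ x3 = 0 := by
  have e1 : l1 • x1 + l2 • x2 + l3 • x3 = 0 := by
    have h := congrArg (a * ·) hsum
    simpa [mul_add, h1, h2, h3] using h
  have e2 : (l1 - l3) • x1 + (l2 - l3) • x2 = 0 := by
    linear_combination (norm := module) e1 - l3 • hsum
  have h1' : a * ((l1 - l3) • x1) = l1 • ((l1 - l3) • x1) := by
    rw [mul_smul_comm, h1, smul_smul, smul_smul, mul_comm]
  have h2' : a * ((l2 - l3) • x2) = l2 • ((l2 - l3) • x2) := by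
    rw [mul_smul_comm, h2, smul_smul, smul_smul, mul_comm]
  obtain ⟨y1, y2⟩ := eig_pair a h12 h1' h2' e2
  have hx1 : x1 = 0 := by
    rcases smul_eq_zero.mp y1 with h | h
    · exact ((sub_ne_zero.mpr h13) h).elim
    · exact h
  have hx2 : x2 = 0 := by
    rcases smul_eq_zero.mp y2 with h | h
    · exact ((sub_ne_zero.mpr h23) h).elim
    · exact h
  refine ⟨hx1, hx2, ?_⟩
  rw [hx1, hx2, zero_add, zero_add] at hsum; exact hsum

lemma exists_decomp {η : F} {b : A} (hb : IsPrimPCAxis F η b) (x : A) :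
    ∃ (β : F) (u' v' : A), u' ∈ PCeig F b η ∧ v' ∈ PCeig F b (1/2 : F) ∧
      x = β • b + u' + v' := by
  have hx : x ∈ PCeig F b 1 ⊔ PCeig F b η ⊔ PCeig F b (1/2 : F) := by
    rw [hb.1.decomp]; trivial
  obtain ⟨y, hy, v', hv', rfl⟩ := Submodule.mem_sup.mp hx
  obtain ⟨z, hz, u', hu', rfl⟩ := Submodule.mem_sup.mp hy
  rw [hb.2.2] at hz
  obtain ⟨β, rfl⟩ := Submodule.mem_span_singleton.mp hz
  exact ⟨β, u', v', hu', hv', rfl⟩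

lemma self_mem_eig_one {η : F} {a : A} (ha : IsPCAxis F η a) : a ∈ PCeig F a 1 := by
  show a * a = (1:F) • a
  rw [ha.idem, one_smul]

set_option maxHeartbeats 1600000 in
lemma key_sym (η : F) (h2 : (2:F) ≠ 0) (hη1 : η ≠ 1) (hηh : η ≠ 1/2)
    (a b : A) (ha : IsPrimPCAxis F η a) (hb : IsPrimPCAxis F η b)
    (α : F) (u v : A) (hu : u ∈ PCeig F a η) (hv : v ∈ PCeig F a (1/2 : F))
    (hbd : b = α • a + u + v) :
    ∃ u' v', u' ∈ PCeig F b η ∧ v' ∈ PCeig F b (1/2 : F) ∧ a = α • b + u' + v' := by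
  obtain ⟨β, u', v', hu', hv', had⟩ := exists_decomp hb a
  -- basic scalar facts
  have hhalf : (1/2 : F) ≠ 0 := by
    rw [one_div]; exact inv_ne_zero h2
  have d1η : (1:F) ≠ η := Ne.symm hη1
  have d1h : (1:F) ≠ 1/2 := by
    intro h
    have h' : (2:F) = 1 := by
      calc (2:F) = 2 * 1 := by ring
      _ = 2 * (1/2) := by rw [← h]
      _ = 1 := by field_simp
    exact one_ne_zero (by linear_combination h' : (1:F) = 0)
  have hη1' : (1:F) - η ≠ 0 := sub_ne_zero.mpr d1η
  -- products
  have ha1 : a * a = a := ha.1.idem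
  have hau : a * u = η • u := hu
  have hav : a * v = (1/2 : F) • v := hv
  have hua : u * a = η • u := by rw [mul_comm]; exact hau
  have hva : v * a = (1/2 : F) • v := by rw [mul_comm]; exact hav
  have huum := ha.1.fusee u hu u hu
  rw [ha.2.2] at huum
  obtain ⟨p, hp⟩ := Submodule.mem_span_singleton.mp huum
  have hp' : u * u = p • a := hp.symm
  have hvvm := ha.1.fushh v hv v hv
  obtain ⟨z, hz, w, hw, hzw⟩ := Submodule.mem_sup.mp hvvm
  rw [ha.2.2] at hz
  obtain ⟨q, rfl⟩ := Submodule.mem_span_singleton.mp hz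
  have hvv' : v * v = q • a + w := hzw.symm
  have huvm : u * v ∈ PCeig F a (1/2 : F) := ha.1.fuseh u hu v hv
  have hvu : v * u = u * v := mul_comm v u
  have hbb : b * b = b := hb.1.idem
  -- expansion of b*b
  have hexp : (α • a + u + v) * (α • a + u + v) =
      (α*α + p + q) • a + ((2*α*η) • u + w) + ((2:F) • (u*v) + α • v) := by
    simp only [add_mul, mul_add, smul_mul_assoc, mul_smul_comm, ha1, hau, hav, hua, hva,
      hp', hvv', hvu]
    match_scalars <;> field_simp <;> ring
  have hsum : ((α*α + p + q - α) • a) + (((2*α*η - 1) • u) + w) + ((2:F) • (u*v) + (α - 1) • v) = 0 := by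
    have hbb' : (α • a + u + v) * (α • a + u + v) = α • a + u + v := by rw [← hbd]; exact hbb
    rw [hexp] at hbb'
    linear_combination (norm := module) hbb'
  have m1 : (α*α + p + q - α) • a ∈ PCeig F a 1 := smul_mem _ _ (self_mem_eig_one ha.1)
  have m2 : (2*α*η - 1) • u + w ∈ PCeig F a η := add_mem (smul_mem _ _ hu) hw
  have m3 : (2:F) • (u*v) + (α - 1) • v ∈ PCeig F a (1/2 : F) :=
    add_mem (smul_mem _ _ huvm) (smul_mem _ _ hv)
  obtain ⟨hx1, hx2, hx3⟩ := eig_tri a d1η d1h hηh (mem_PCeig' m1) (mem_PCeig' m2) (mem_PCeig' m3) hsum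
  -- u*v in terms of v
  have huv : u * v = ((1/2 : F) * (1 - α)) • v := by
    have h := congrArg (fun x => (1/2 : F) • x) hx3
    simp only [smul_add, smul_smul, smul_zero] at h
    rw [show ((1/2:F) * 2) = 1 by field_simp, one_smul] at h
    linear_combination (norm := module) h
  -- a-side products with b
  have hab : a * b = α • a + η • u + (1/2 : F) • v := by
    rw [hbd]; simp only [mul_add, mul_smul_comm, ha1, hau, hav]
  have hbu2 : b * u = p • a + (α*η) • u + u * v := by
    rw [hbd]; simp only [add_mul, smul_mul_assoc, hau, hua, hp', hvu]
    module
  have hbv2 : b * v = q • a + w + ((1/2:F) * α) • v + u * v := by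
    rw [hbd]; simp only [add_mul, smul_mul_assoc, hav, hva, hvv']
    module
  have hbab : b * (a * b) = α • (a*b) + η • (b*u) + (1/2 : F) • (b*v) := by
    have h := congrArg (fun x => b * x) hab
    simp only [mul_add, mul_smul_comm] at h
    rw [mul_comm b a] at h
    exact h
  -- b-side identity
  have hbu' : b * u' = η • u' := hu'
  have hbv' : b * v' = (1/2 : F) • v' := hv'
  have hba : b * a = β • b + η • u' + (1/2 : F) • v' := by
    have h := congrArg (fun x => b * x) had
    simp only [mul_add, mul_smul_comm, hbb, hbu', hbv'] at h
    exact h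
  have hbba : b * (b * a) = β • b + (η*η) • u' + ((1/2:F) * (1/2:F)) • v' := by
    rw [hba]
    simp only [mul_add, mul_smul_comm, hbb, hbu', hbv']
    module
  have Ea : b * (a * b) - (η + (1/2:F)) • (a * b) + (η * (1/2:F)) • a
      = ((1-η) * (1/2:F) * β) • b := by
    rw [mul_comm a b, hbba, hba, had]
    match_scalars <;> field_simp <;> ring
  -- a-side coords for the same element
  have Eaa : b * (a * b) - (η + (1/2:F)) • (a * b) + (η * (1/2:F)) • a
      = (α*α + η*p + (1/2:F)*q - (η+(1/2:F))*α + η*(1/2:F)) • a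
        + ((α*η + α*η*η - (η+(1/2:F))*η) • u + (1/2:F) • w)
        + (((1/2:F)*α + (1/2:F)*((1/2:F)*α) + (η+(1/2:F))*((1/2:F)*(1-α)) - (η+(1/2:F))*(1/2:F)) • v) := by
    rw [hbab, hbu2, hbv2, hab, huv]
    module
  have Efin : (α*α + η*p + (1/2:F)*q - (η+(1/2:F))*α + η*(1/2:F)) • a
        + ((α*η + α*η*η - (η+(1/2:F))*η) • u + (1/2:F) • w)
        + (((1/2:F)*α + (1/2:F)*((1/2:F)*α) + (η+(1/2:F))*((1/2:F)*(1-α)) - (η+(1/2:F))*(1/2:F)) • v)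
      = ((1-η) * (1/2:F) * β) • (α • a + u + v) := by
    rw [← hbd, ← Eaa]; exact Ea
  have hsum2 : ((α*α + η*p + (1/2:F)*q - (η+(1/2:F))*α + η*(1/2:F) - (1-η) * (1/2:F) * β * α) • a)
      + (((α*η + α*η*η - (η+(1/2:F))*η - (1-η) * (1/2:F) * β) • u + (1/2:F) • w))
      + (((1/2:F)*α + (1/2:F)*((1/2:F)*α) + (η+(1/2:F))*((1/2:F)*(1-α)) - (η+(1/2:F))*(1/2:F)
          - (1-η) * (1/2:F) * β) • v) = 0 := by
    linear_combination (norm := module) Efin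
  have n1 : _ ∈ PCeig F a 1 := smul_mem _ (α*α + η*p + (1/2:F)*q - (η+(1/2:F))*α + η*(1/2:F) - (1-η) * (1/2:F) * β * α) (self_mem_eig_one ha.1)
  have n2 : (α*η + α*η*η - (η+(1/2:F))*η - (1-η) * (1/2:F) * β) • u + (1/2:F) • w ∈ PCeig F a η :=
    add_mem (smul_mem _ _ hu) (smul_mem _ _ hw)
  have n3 : ((1/2:F)*α + (1/2:F)*((1/2:F)*α) + (η+(1/2:F))*((1/2:F)*(1-α)) - (η+(1/2:F))*(1/2:F)
      - (1-η) * (1/2:F) * β) • v ∈ PCeig F a (1/2:F) := smul_mem _ _ hv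
  obtain ⟨hC1, hC2, hC3⟩ := eig_tri a d1η d1h hηh (mem_PCeig' n1) (mem_PCeig' n2) (mem_PCeig' n3) hsum2
  -- conclude β = α by cases
  have hβα : β = α := by
    by_cases hv0 : v = 0
    · by_cases hu0 : u = 0
      · -- b = α • a, forces α = 1 and b = a
        have hw0 : w = 0 := by
          have : q • a + w = 0 := by rw [← hvv', hv0, mul_zero]
          exact (eig_pair a d1η (mem_PCeig' (smul_mem _ q (self_mem_eig_one ha.1))) hw this).2
        have hba' : b = α • a := by rw [hbd, hu0, hv0, add_zero, add_zero]
        have hαα : α * α = α := by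
          have h := hbb
          rw [hba', smul_mul_assoc, mul_smul_comm, ha1, smul_smul] at h
          have h0 : (α * α - α) • a = 0 := by
            linear_combination (norm := module) h
          rcases smul_eq_zero.mp h0 with h' | h'
          · exact sub_eq_zero.mp h'
          · exact absurd h' ha.2.1
        have hα0 : α ≠ 0 := by
          intro h
          exact hb.2.1 (by rw [hba', h, zero_smul])
        have hα1 : α = 1 := mul_left_cancel₀ hα0 (by linear_combination hαα)
        have hb_eq_a : b = a := by rw [hba', hα1, one_smul]
        have hsum3 : (1-β) • b + (-u') + (-v') = 0 := by
          linear_combination (norm := module) had + hb_eq_a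
        obtain ⟨hz1, _, _⟩ := eig_tri b d1η d1h hηh
          (mem_PCeig' (smul_mem _ (1-β) (self_mem_eig_one hb.1)))
          (mem_PCeig' (neg_mem hu')) (mem_PCeig' (neg_mem hv')) hsum3
        have hβ1 : (1:F) - β = 0 := by
          rcases smul_eq_zero.mp hz1 with h' | h'
          · exact h'
          · exact absurd h' hb.2.1
        linear_combination -hβ1 - hα1
      · -- v = 0, u ≠ 0 : scalar grind
        have hw0 : w = 0 := by
          have : q • a + w = 0 := by rw [← hvv', hv0, mul_zero]
          exact (eig_pair a d1η (mem_PCeig' (smul_mem _ q (self_mem_eig_one ha.1))) hw this).2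
        have hq0 : q = 0 := by
          have : q • a + w = 0 := by rw [← hvv', hv0, mul_zero]
          have h0 := (eig_pair a d1η (mem_PCeig' (smul_mem _ q (self_mem_eig_one ha.1))) hw this).1
          rcases smul_eq_zero.mp h0 with h' | h'
          · exact h'
          · exact absurd h' ha.2.1
        have hS1 : 2*α*η - 1 = 0 := by
          have h0 : (2*α*η - 1) • u = 0 := by rw [hw0, add_zero] at hx2; exact hx2
          rcases smul_eq_zero.mp h0 with h' | h'
          · exact h'
          · exact absurd h' hu0
        have hS2 : α*α + p + q - α = 0 := by
          rcases smul_eq_zero.mp hx1 with h' | h'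
          · exact h'
          · exact absurd h' ha.2.1
        have hS3 : α*η + α*η*η - (η+(1/2:F))*η - (1-η) * (1/2:F) * β = 0 := by
          have h0 : (α*η + α*η*η - (η+(1/2:F))*η - (1-η) * (1/2:F) * β) • u = 0 := by
            rw [hw0, smul_zero, add_zero] at hC2; exact hC2
          rcases smul_eq_zero.mp h0 with h' | h'
          · exact h'
          · exact absurd h' hu0
        have hS4 : α*α + η*p + (1/2:F)*q - (η+(1/2:F))*α + η*(1/2:F) - (1-η) * (1/2:F) * β * α = 0 := by
          rcases smul_eq_zero.mp hC1 with h' | h'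
          · exact h'
          · exact absurd h' ha.2.1
        have hSt : 2*(1/2:F) - 1 = 0 := by field_simp; ring
        have hG1 : (η+1)*(2*η-1)^2 = 0 := by
          linear_combination (4*η^2) * hS4 - (4*η^2*α) * hS3 - (4*η^3) * hS2
            + (4*η^3 - 4*η^2*(1/2:F)) * hq0
            + (-1 + 2*η + 2*η*(1/2:F) + η^2 - 2*η^2*(1/2:F) - 2*η^3 - 2*α*η + 4*α*η^2 + 2*α*η^3) * hS1
            + (η - η^2 - 2*η^3) * hSt
        have hG2 : η + 1 = 0 := by
          rcases mul_eq_zero.mp hG1 with h' | h'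
          · exact h'
          · exfalso
            apply hηh
            have h'' : 2*η - 1 = 0 := by
              have := pow_eq_zero_iff (n := 2) (by norm_num) |>.mp h'
              exact this
            field_simp
            linear_combination h''
        linear_combination (-1 : F) * hS3 + (1/2:F) * hS1
          + ((1/2:F) - β + 1 - (1/2:F) - η*α) * hSt
          + (1 - (1/2:F) + (1/2:F)*β - η - α + α*η) * hG2
    · -- v ≠ 0 : direct from hC3
      have hs : (1/2:F)*α + (1/2:F)*((1/2:F)*α) + (η+(1/2:F))*((1/2:F)*(1-α)) - (η+(1/2:F))*(1/2:F)
          - (1-η) * (1/2:F) * β = 0 := by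
        rcases smul_eq_zero.mp hC3 with h' | h'
        · exact h'
        · exact absurd h' hv0
      have h0 : ((1-η) * (1/2:F)) * (α - β) = 0 := by linear_combination hs
      have := (mul_eq_zero.mp h0).resolve_left (mul_ne_zero hη1' hhalf)
      exact (sub_eq_zero.mp this).symm
  rw [hβα] at had
  exact ⟨u', v', hu', hv', had⟩
end Aux

/-- action of the Miyamoto involutions `τ_a`, `τ_b` of two primitive axes
`a`, `b` (with `α = φ_a(b)`) on `a`, `b`, `ab`, giving the stated matrices on the subalgebra
generated by `a` and `b` with respect to the spanning set `a`, `b`, `ab`. -/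
theorem stmt11 (η : F) (h2 : (2 : F) ≠ 0) (hη1 : η ≠ 1) (hηh : η ≠ 1 / 2)
    (hA : IsPCAxialAlgebra F A η)
    (a b : A) (ha : IsPrimPCAxis F η a) (hb : IsPrimPCAxis F η b)
    (α : F) (u v : A)
    (hu : u ∈ PCeig F a η) (hv : v ∈ PCeig F a (1 / 2 : F))
    (hbd : b = α • a + u + v)
    (τa τb : A →ₗ[F] A)
    (hτa1 : ∀ x ∈ PCeig F a (1 : F), τa x = x)
    (hτaη : ∀ x ∈ PCeig F a η, τa x = x)
    (hτah : ∀ x ∈ PCeig F a (1 / 2 : F), τa x = -x)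
    (hτb1 : ∀ x ∈ PCeig F b (1 : F), τb x = x)
    (hτbη : ∀ x ∈ PCeig F b η, τb x = x)
    (hτbh : ∀ x ∈ PCeig F b (1 / 2 : F), τb x = -x) :
    τa a = a ∧
    τa b = (1 - 2 * η)⁻¹ •
      ((4 * α * (1 - η)) • a + (1 + 2 * η) • b - (4 : F) • (a * b)) ∧
    τa (a * b) = (1 - 2 * η)⁻¹ •
      ((2 * α * (1 - η)) • a + (2 * η) • b - (1 + 2 * η) • (a * b)) ∧
    τb a = (1 - 2 * η)⁻¹ •
      ((1 + 2 * η) • a + (4 * α * (1 - η)) • b - (4 : F) • (a * b)) ∧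
    τb b = b ∧
    τb (a * b) = (1 - 2 * η)⁻¹ •
      ((2 * η) • a + (2 * α * (1 - η)) • b - (1 + 2 * η) • (a * b)) := by
  have h12 : (1 - 2*η) ≠ 0 := by
    intro h
    apply hηh
    field_simp
    linear_combination -h
  have ha1 : a * a = a := ha.1.idem
  have hau : a * u = η • u := hu
  have hav : a * v = (1/2 : F) • v := hv
  have hab : a * b = α • a + η • u + (1/2 : F) • v := by
    rw [hbd]; simp only [mul_add, mul_smul_comm, ha1, hau, hav]
  have hτaa : τa a = a := hτa1 a (self_mem_eig_one ha.1)
  have hτbb : τb b = b := hτb1 b (self_mem_eig_one hb.1)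
  have hτab : τa b = α • a + u - v := by
    rw [hbd]
    simp only [map_add, map_smul, hτaa, hτaη u hu, hτah v hv]
    module
  have hτac : τa (a * b) = α • a + η • u - (1/2:F) • v := by
    rw [hab]
    simp only [map_add, map_smul, hτaa, hτaη u hu, hτah v hv]
    module
  obtain ⟨u', v', hu', hv', had⟩ := key_sym η h2 hη1 hηh a b ha hb α u v hu hv hbd
  have hb1 : b * b = b := hb.1.idem
  have hbu' : b * u' = η • u' := hu'
  have hbv' : b * v' = (1/2 : F) • v' := hv'
  have hba : a * b = α • b + η • u' + (1/2 : F) • v' := by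
    rw [mul_comm, had]; simp only [mul_add, mul_smul_comm, hb1, hbu', hbv']
  have hτba : τb a = α • b + u' - v' := by
    rw [had]
    simp only [map_add, map_smul, hτbb, hτbη u' hu', hτbh v' hv']
    module
  have hτbc : τb (a * b) = α • b + η • u' - (1/2:F) • v' := by
    rw [hba]
    simp only [map_add, map_smul, hτbb, hτbη u' hu', hτbh v' hv']
    module
  have inv_form : ∀ x y : A, (1-2*η) • x = y → x = (1-2*η)⁻¹ • y := by
    intro x y h
    rw [← h, smul_smul, inv_mul_cancel₀ h12, one_smul]
  refine ⟨hτaa, ?_, ?_, ?_, hτbb, ?_⟩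
  · rw [hτab]
    apply inv_form
    rw [hab, hbd]
    match_scalars <;> field_simp <;> ring
  · rw [hτac]
    apply inv_form
    rw [hab, hbd]
    match_scalars <;> field_simp <;> ring
  · rw [hτba]
    apply inv_form
    rw [hba, had]
    match_scalars <;> field_simp <;> ring
  · rw [hτbc]
    apply inv_form
    rw [hba, had]
    match_scalars <;> field_simp <;> ring
end
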